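/- Let n ≥ 2, α nonnegative edge weights with ∑_{i=1}^{n-1} α_{in} > 0, and α' the modified weights with α'_{ij} = α_{ij} + α_{in}α_{jn}/∑_k α_{kn} for i,j ≤ n-1 and α'_{in} = 0. Then for every 1 ≤ k ≤ n, μ_k(α) − μ_k(α') ≤ 2 ∑_{1≤i≤j≤n-1} α_{in}α_{jn} / ∑_{i=1}^{n-1} α_{in}, where μ_k denotes the k-th smallest eigenvalue of the corresponding weighted graph Laplacian. -/

import Mathlib

/-!
With `a i = α i n`, `S = ∑ a i` and `y i = x i - x n`, the definition of `α'` gives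
`xᵀ L(α) x - xᵀ L(α') x = ∑ a_i y_i² - S⁻¹ ∑_{i<j} a_i a_j (y_i - y_j)²`, which a weighted
Lagrange identity turns into `(∑ a_i y_i)² / S`. Cauchy–Schwarz against `(a_1, …, a_{n-1}, -S)`
bounds `(∑ a_i y_i)²` by `(S² + ∑ a_i²) ‖x‖² = 2 (∑_{i≤j} a_i a_j) ‖x‖²`. Hence
`L(α) ≤ L(α') + c I` in the Loewner order, `c` being the stated bound, and the eigenvalue
inequality follows by the Courant–Fischer dimension count.
-/

open Matrix BigOperators

noncomputable def wvec {n : ℕ} (i j : Fin n) : Fin n → ℝ :=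
  Pi.single i 1 - Pi.single j 1

noncomputable def Lap {n : ℕ} (α : Fin n → Fin n → ℝ) : Matrix (Fin n) (Fin n) ℝ :=
  ∑ i, ∑ j, if i < j then α i j • Matrix.vecMulVec (wvec i j) (wvec i j) else 0

/-- The eigenvalues of a Hermitian matrix, listed in nondecreasing order. -/
noncomputable def sortedEigs {n : ℕ} (A : Matrix (Fin n) (Fin n) ℝ)
    (hA : A.IsHermitian) : Fin n → ℝ :=
  hA.eigenvalues ∘ Tuple.sort hA.eigenvalues

section SymmetricSums

variable {ι M : Type*} [Fintype ι] [LinearOrder ι] [AddCommMonoid M]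

lemma sum_sum_ite_le_eq (g : ι → ι → M) :
    (∑ i, ∑ j, if i ≤ j then g i j else 0) =
      (∑ i, ∑ j, if i < j then g i j else 0) + ∑ i, g i i := by
  rw [← Finset.sum_add_distrib]
  refine Finset.sum_congr rfl fun i _ => ?_
  have hdiag : g i i = ∑ j, if i = j then g i j else 0 := by simp
  rw [hdiag, ← Finset.sum_add_distrib]
  refine Finset.sum_congr rfl fun j _ => ?_
  split_ifs <;> first | (exfalso; order) | simp

lemma sum_sum_ite_lt_add_sum_sum_ite_lt_of_symm (g : ι → ι → M) (hg : ∀ i j, g i j = g j i) :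
    (∑ i, ∑ j, if i < j then g i j else 0) + (∑ i, ∑ j, if i < j then g i j else 0) + ∑ i, g i i
      = ∑ i, ∑ j, g i j := by
  have hswap : (∑ i, ∑ j, if i < j then g i j else 0) = ∑ i, ∑ j, if j < i then g i j else 0 := by
    rw [Finset.sum_comm]
    exact Finset.sum_congr rfl fun i _ => Finset.sum_congr rfl fun j _ => by rw [hg]
  nth_rw 2 [hswap]
  rw [← Finset.sum_add_distrib, ← Finset.sum_add_distrib]
  refine Finset.sum_congr rfl fun i _ => ?_
  have hdiag : g i i = ∑ j, if i = j then g i j else 0 := by simp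
  rw [hdiag, ← Finset.sum_add_distrib, ← Finset.sum_add_distrib]
  refine Finset.sum_congr rfl fun j _ => ?_
  split_ifs <;> first | (exfalso; order) | simp

lemma two_mul_sum_sum_ite_le_mul {R : Type*} [CommSemiring R] (a : ι → R) :
    2 * (∑ i, ∑ j, if i ≤ j then a i * a j else 0) = (∑ i, a i) ^ 2 + ∑ i, a i ^ 2 := by
  rw [sum_sum_ite_le_eq, sq, Finset.sum_mul_sum,
    ← sum_sum_ite_lt_add_sum_sum_ite_lt_of_symm _ fun i j => mul_comm (a i) (a j)]
  simp only [sq]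
  ring

lemma sum_mul_sum_mul_sq_sub_sum_sum_ite_lt {K : Type*} [Field K] [CharZero K] (a y : ι → K) :
    (∑ i, a i) * (∑ i, a i * y i ^ 2)
        - (∑ i, ∑ j, if i < j then a i * a j * (y i - y j) ^ 2 else 0)
      = (∑ i, a i * y i) ^ 2 := by
  have hsymm := sum_sum_ite_lt_add_sum_sum_ite_lt_of_symm (fun i j => a i * a j * (y i - y j) ^ 2)
    fun i j => by ring
  have hexpand : ∑ i, ∑ j, a i * a j * (y i - y j) ^ 2
      = 2 * ((∑ i, a i) * (∑ i, a i * y i ^ 2)) - 2 * (∑ i, a i * y i) ^ 2 := by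
    have hterm : ∀ i j, a i * a j * (y i - y j) ^ 2
        = a j * (a i * y i ^ 2) + a i * (a j * y j ^ 2) - 2 * ((a i * y i) * (a j * y j)) :=
      fun i j => by ring
    simp only [hterm, Finset.sum_add_distrib, Finset.sum_sub_distrib, ← Finset.mul_sum,
      ← Finset.sum_mul]
    ring
  simp only [sub_self, zero_pow two_ne_zero, mul_zero, Finset.sum_const_zero, add_zero] at hsymm
  linear_combination (-1 / 2 : K) * (hsymm.trans hexpand)

end SymmetricSums

lemma Fin.sum_sum_ite_lt_castSucc {M : Type*} [AddCommMonoid M] {n : ℕ}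
    (f : Fin (n + 1) → Fin (n + 1) → M) :
    (∑ i, ∑ j, if i < j then f i j else 0) =
      (∑ i : Fin n, ∑ j : Fin n, if i < j then f i.castSucc j.castSucc else 0) +
        ∑ i : Fin n, f i.castSucc (Fin.last n) := by
  have hlast : ∀ j : Fin (n + 1), ¬ Fin.last n < j := fun j => not_lt.2 (Fin.le_last j)
  simp [Fin.sum_univ_castSucc, Fin.castSucc_lt_last, Finset.sum_add_distrib, hlast]

lemma sq_sum_mul_sub_last_le {n : ℕ} (a : Fin n → ℝ) (x : Fin (n + 1) → ℝ) :
    (∑ i, a i * (x i.castSucc - x (Fin.last n))) ^ 2 ≤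
      ((∑ i, a i) ^ 2 + ∑ i, a i ^ 2) * (x ⬝ᵥ x) := by
  set f : Fin (n + 1) → ℝ := Fin.snoc a (-∑ i, a i)
  have hfx : ∑ p, f p * x p = ∑ i, a i * (x i.castSucc - x (Fin.last n)) := by
    simp [f, Fin.sum_univ_castSucc, mul_sub, Finset.sum_sub_distrib, Finset.sum_mul]
    ring
  have hf2 : ∑ p, f p ^ 2 = (∑ i, a i) ^ 2 + ∑ i, a i ^ 2 := by
    simp [f, Fin.sum_univ_castSucc]
    ring
  have hxx : x ⬝ᵥ x = ∑ p, x p ^ 2 := by simp [dotProduct, sq]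
  rw [← hfx, ← hf2, hxx]
  exact Finset.sum_mul_sq_le_sq_mul_sq _ f x

namespace OrthonormalBasis

variable {ι 𝕜 E : Type*} [Fintype ι] [RCLike 𝕜] [NormedAddCommGroup E] [InnerProductSpace 𝕜 E]

lemma repr_eq_zero_of_mem_span_image (b : OrthonormalBasis ι 𝕜 E) {s : Set ι} {x : E}
    (hx : x ∈ Submodule.span 𝕜 (b '' s)) {i : ι} (hi : i ∉ s) : b.repr x i = 0 := by
  rw [← b.coe_toBasis, Module.Basis.mem_span_image] at hx
  rw [← b.coe_toBasis_repr_apply]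
  exact Finsupp.notMem_support_iff.mp fun h => hi (hx h)

lemma finrank_span_image_finset (b : OrthonormalBasis ι 𝕜 E) (s : Finset ι) :
    Module.finrank 𝕜 (Submodule.span 𝕜 (b '' s)) = s.card := by
  have hli : LinearIndependent 𝕜 fun i : (s : Set ι) => b i :=
    b.orthonormal.linearIndependent.comp _ Subtype.val_injective
  rw [Set.image_eq_range, finrank_span_eq_card hli]
  simp

lemma dotProduct_self_eq_sum_repr_sq (b : OrthonormalBasis ι ℝ (EuclideanSpace ℝ ι))
    (x : EuclideanSpace ℝ ι) : x.ofLp ⬝ᵥ x.ofLp = ∑ i, b.repr x i ^ 2 := by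
  rw [← EuclideanSpace.real_norm_sq_eq, b.repr.norm_map, EuclideanSpace.real_norm_sq_eq]
  simp [dotProduct, sq]

end OrthonormalBasis

namespace Matrix.IsHermitian

variable {ι : Type*} [Fintype ι] [DecidableEq ι] {A : Matrix ι ι ℝ} (hA : A.IsHermitian)

lemma dotProduct_mulVec_eq_sum_eigenvalues (x : EuclideanSpace ℝ ι) :
    x.ofLp ⬝ᵥ A *ᵥ x.ofLp = ∑ i, hA.eigenvalues i * hA.eigenvectorBasis.repr x i ^ 2 := by
  have hcoord : ∀ i, x.ofLp ⬝ᵥ (hA.eigenvectorBasis i).ofLp = hA.eigenvectorBasis.repr x i :=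
    fun i => by simp [OrthonormalBasis.repr_apply_apply, EuclideanSpace.inner_eq_star_dotProduct]
  nth_rw 2 [← hA.eigenvectorBasis.sum_repr x]
  simp only [WithLp.ofLp_sum, WithLp.ofLp_smul, mulVec_sum, mulVec_smul,
    hA.mulVec_eigenvectorBasis, dotProduct_sum, dotProduct_smul, hcoord, smul_eq_mul]
  exact Finset.sum_congr rfl fun i _ => by ring

variable {s : Set ι} {c : ℝ} {x : EuclideanSpace ℝ ι}

lemma le_dotProduct_mulVec_of_mem_span (hc : ∀ i ∈ s, c ≤ hA.eigenvalues i)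
    (hx : x ∈ Submodule.span ℝ (hA.eigenvectorBasis '' s)) :
    c * (x.ofLp ⬝ᵥ x.ofLp) ≤ x.ofLp ⬝ᵥ A *ᵥ x.ofLp := by
  rw [hA.dotProduct_mulVec_eq_sum_eigenvalues, hA.eigenvectorBasis.dotProduct_self_eq_sum_repr_sq,
    Finset.mul_sum]
  refine Finset.sum_le_sum fun i _ => ?_
  by_cases hi : i ∈ s
  · exact mul_le_mul_of_nonneg_right (hc i hi) (sq_nonneg _)
  · simp [hA.eigenvectorBasis.repr_eq_zero_of_mem_span_image hx hi]

lemma dotProduct_mulVec_le_of_mem_span (hc : ∀ i ∈ s, hA.eigenvalues i ≤ c)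
    (hx : x ∈ Submodule.span ℝ (hA.eigenvectorBasis '' s)) :
    x.ofLp ⬝ᵥ A *ᵥ x.ofLp ≤ c * (x.ofLp ⬝ᵥ x.ofLp) := by
  rw [hA.dotProduct_mulVec_eq_sum_eigenvalues, hA.eigenvectorBasis.dotProduct_self_eq_sum_repr_sq,
    Finset.mul_sum]
  refine Finset.sum_le_sum fun i _ => ?_
  by_cases hi : i ∈ s
  · exact mul_le_mul_of_nonneg_right (hc i hi) (sq_nonneg _)
  · simp [hA.eigenvectorBasis.repr_eq_zero_of_mem_span_image hx hi]

end Matrix.IsHermitian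

lemma sortedEigs_le_add_of_forall_dotProduct_mulVec_le {m : ℕ} {A B : Matrix (Fin m) (Fin m) ℝ}
    (hA : A.IsHermitian) (hB : B.IsHermitian) {c : ℝ}
    (h : ∀ x : Fin m → ℝ, x ⬝ᵥ A *ᵥ x ≤ x ⬝ᵥ B *ᵥ x + c * (x ⬝ᵥ x)) (k : Fin m) :
    sortedEigs A hA k ≤ sortedEigs B hB k + c := by
  set V := Submodule.span ℝ
    (hA.eigenvectorBasis '' ((Finset.Ici k).image (Tuple.sort hA.eigenvalues) : Set (Fin m)))
  set W := Submodule.span ℝ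
    (hB.eigenvectorBasis '' ((Finset.Iic k).image (Tuple.sort hB.eigenvalues) : Set (Fin m)))
  have hV : Module.finrank ℝ V = m - k := by
    rw [hA.eigenvectorBasis.finrank_span_image_finset,
      Finset.card_image_of_injective _ (Equiv.injective _), Fin.card_Ici]
  have hW : Module.finrank ℝ W = k + 1 := by
    rw [hB.eigenvectorBasis.finrank_span_image_finset,
      Finset.card_image_of_injective _ (Equiv.injective _), Fin.card_Iic]
  have hVW : ¬ Disjoint V W := fun hd => by
    have := Submodule.finrank_add_finrank_le_of_disjoint hd
    rw [hV, hW, finrank_euclideanSpace_fin] at this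
    omega
  obtain ⟨x, hxV, hxW, hx0⟩ : ∃ x ∈ V, x ∈ W ∧ x ≠ 0 := by
    simpa [Submodule.disjoint_def] using hVW
  have hx : 0 < x.ofLp ⬝ᵥ x.ofLp := by
    simpa using dotProduct_star_self_pos_iff.mpr ((WithLp.ofLp_injective 2).ne hx0)
  have hlow := hA.le_dotProduct_mulVec_of_mem_span (c := sortedEigs A hA k) (by
    simp only [Finset.coe_image, Set.forall_mem_image, Finset.mem_coe, Finset.mem_Ici]
    exact fun j hj => Tuple.monotone_sort hA.eigenvalues hj) hxV
  have hup := hB.dotProduct_mulVec_le_of_mem_span (c := sortedEigs B hB k) (by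
    simp only [Finset.coe_image, Set.forall_mem_image, Finset.mem_coe, Finset.mem_Iic]
    exact fun j hj => Tuple.monotone_sort hB.eigenvalues hj) hxW
  refine le_of_mul_le_mul_right ?_ hx
  calc sortedEigs A hA k * (x.ofLp ⬝ᵥ x.ofLp)
      ≤ x.ofLp ⬝ᵥ A *ᵥ x.ofLp := hlow
    _ ≤ x.ofLp ⬝ᵥ B *ᵥ x.ofLp + c * (x.ofLp ⬝ᵥ x.ofLp) := h x.ofLp
    _ ≤ (sortedEigs B hB k + c) * (x.ofLp ⬝ᵥ x.ofLp) := by linarith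

lemma dotProduct_Lap_mulVec {n : ℕ} (β : Fin n → Fin n → ℝ) (x : Fin n → ℝ) :
    x ⬝ᵥ Lap β *ᵥ x = ∑ i, ∑ j, if i < j then β i j * (x i - x j) ^ 2 else 0 := by
  simp only [Lap, sum_mulVec, dotProduct_sum]
  refine Finset.sum_congr rfl fun i _ => Finset.sum_congr rfl fun j _ => ?_
  split_ifs
  · simp [smul_mulVec, vecMulVec_mulVec, wvec, sq]
  · simp

lemma dotProduct_Lap_sub_Lap_mulVec {n : ℕ} {α α' : Fin (n + 1) → Fin (n + 1) → ℝ}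
    (hs : ∑ k : Fin n, α k.castSucc (Fin.last n) ≠ 0)
    (hα' : ∀ i j : Fin n, i < j → α' i.castSucc j.castSucc
      = α i.castSucc j.castSucc +
        α i.castSucc (Fin.last n) * α j.castSucc (Fin.last n) /
          ∑ k : Fin n, α k.castSucc (Fin.last n))
    (hα'0 : ∀ i : Fin n, α' i.castSucc (Fin.last n) = 0) (x : Fin (n + 1) → ℝ) :
    x ⬝ᵥ Lap α *ᵥ x - x ⬝ᵥ Lap α' *ᵥ x
      = (∑ i : Fin n, α i.castSucc (Fin.last n) * (x i.castSucc - x (Fin.last n))) ^ 2 /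
          ∑ k : Fin n, α k.castSucc (Fin.last n) := by
  set a : Fin n → ℝ := fun i => α i.castSucc (Fin.last n)
  set y : Fin n → ℝ := fun i => x i.castSucc - x (Fin.last n)
  have hα'_quad : (∑ i : Fin n, ∑ j : Fin n, if i < j then
        α' i.castSucc j.castSucc * (x i.castSucc - x j.castSucc) ^ 2 else 0)
      = (∑ i : Fin n, ∑ j : Fin n, if i < j then
          α i.castSucc j.castSucc * (x i.castSucc - x j.castSucc) ^ 2 else 0)
        + (∑ i, ∑ j, if i < j then a i * a j * (y i - y j) ^ 2 else 0) / ∑ i, a i := by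
    rw [Finset.sum_div, ← Finset.sum_add_distrib]
    refine Finset.sum_congr rfl fun i _ => ?_
    rw [Finset.sum_div, ← Finset.sum_add_distrib]
    refine Finset.sum_congr rfl fun j _ => ?_
    split_ifs with h
    · rw [hα' i j h]
      ring
    · simp
  rw [dotProduct_Lap_mulVec, dotProduct_Lap_mulVec, Fin.sum_sum_ite_lt_castSucc,
    Fin.sum_sum_ite_lt_castSucc (fun i j => α' i j * (x i - x j) ^ 2), hα'_quad]
  simp only [hα'0, zero_mul, Finset.sum_const_zero, add_zero]
  rw [eq_div_iff hs, ← sum_mul_sum_mul_sq_sub_sum_sum_ite_lt]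
  field_simp
  ring

theorem stmt2_general (n : ℕ) (α : Fin (n+1) → Fin (n+1) → ℝ)
    (hs : 0 < ∑ i : Fin n, α i.castSucc (Fin.last n))
    (α' : Fin (n+1) → Fin (n+1) → ℝ)
    (hα' : ∀ i j : Fin n, i < j → α' i.castSucc j.castSucc
      = α i.castSucc j.castSucc +
        α i.castSucc (Fin.last n) * α j.castSucc (Fin.last n) /
          ∑ k : Fin n, α k.castSucc (Fin.last n))
    (hα'0 : ∀ i : Fin n, α' i.castSucc (Fin.last n) = 0)
    (hA : (Lap α).IsHermitian) (hB : (Lap α').IsHermitian) :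
    ∀ k : Fin (n+1),
      sortedEigs (Lap α) hA k - sortedEigs (Lap α') hB k ≤
        2 * (∑ i : Fin n, ∑ j : Fin n, if i ≤ j then
              α i.castSucc (Fin.last n) * α j.castSucc (Fin.last n) else 0) /
          ∑ i : Fin n, α i.castSucc (Fin.last n) := by
  intro k
  rw [two_mul_sum_sum_ite_le_mul fun i : Fin n => α i.castSucc (Fin.last n), sub_le_iff_le_add']
  refine sortedEigs_le_add_of_forall_dotProduct_mulVec_le hA hB (fun x => ?_) k
  rw [div_mul_eq_mul_div, ← sub_le_iff_le_add', dotProduct_Lap_sub_Lap_mulVec hs.ne' hα' hα'0 x]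
  exact div_le_div_of_nonneg_right (sq_sum_mul_sub_last_le _ x) hs.le

theorem stmt2 (n : ℕ) (hn : 1 ≤ n) (α : Fin (n+1) → Fin (n+1) → ℝ)
    (hα : ∀ i j : Fin (n+1), i < j → 0 ≤ α i j)
    (hs : 0 < ∑ i : Fin n, α i.castSucc (Fin.last n))
    (α' : Fin (n+1) → Fin (n+1) → ℝ)
    (hα' : ∀ i j : Fin n, i < j → α' i.castSucc j.castSucc
      = α i.castSucc j.castSucc +
        α i.castSucc (Fin.last n) * α j.castSucc (Fin.last n) /
          ∑ k : Fin n, α k.castSucc (Fin.last n))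
    (hα'0 : ∀ i : Fin n, α' i.castSucc (Fin.last n) = 0)
    (hA : (Lap α).IsHermitian) (hB : (Lap α').IsHermitian) :
    ∀ k : Fin (n+1),
      sortedEigs (Lap α) hA k - sortedEigs (Lap α') hB k ≤
        2 * (∑ i : Fin n, ∑ j : Fin n, if i ≤ j then
              α i.castSucc (Fin.last n) * α j.castSucc (Fin.last n) else 0) /
          ∑ i : Fin n, α i.castSucc (Fin.last n) :=
  stmt2_general n α hs α' hα' hα'0 hA hB
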